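/- arXiv:1409.5478 — 9 statements merged into one kernel-verified Lean document; each statement's English description precedes it below -/
import Mathlib

section
/- Let K be a field and let V and W be finite-dimensional K-vector spaces with dim V = r ≥ 1 and dim W = m. Let c be a natural number with c ≤ r·m and c·r ≥ m. Then there exists a linear subspace H ⊆ V ⊗ W with dim H = r·m − c such that the only vector w ∈ W with v ⊗ w ∈ H for all v ∈ V is w = 0. -/
/-!
Subspaces of `V ⊗ W` of codimension `c` arise as kernels of maps `V ⊗ W → K^c`, and such maps
correspond to linear maps `ψ : W → Hom(V, K^c)`. The kernel of the map induced by `ψ` contains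
`V ⊗ w` exactly when `ψ w = 0`, so it suffices that `ψ` be injective, which is possible as soon as
`dim W = m ≤ c·r = dim Hom(V, K^c)`. Any subspace of that kernel of dimension `r·m - c` will do.
-/

open TensorProduct Module

theorem Submodule.exists_le_finrank_eq {K M : Type*} [DivisionRing K] [AddCommGroup M]
    [Module K M] (N : Submodule K M) [FiniteDimensional K N] {d : ℕ}
    (hd : d ≤ finrank K N) : ∃ P ≤ N, finrank K P = d := by
  obtain ⟨f, hf⟩ := finrank_le_iff_exists_linearMap.mp
    (by rwa [finrank_fin_fun] : finrank K (Fin d → K) ≤ finrank K N)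
  refine ⟨LinearMap.range (N.subtype ∘ₗ f), ?_, ?_⟩
  · exact (LinearMap.range_comp_le_range f N.subtype).trans N.range_subtype.le
  · rw [LinearMap.finrank_range_of_inj (N.injective_subtype.comp hf :), finrank_fin_fun]

theorem LinearMap.sub_le_finrank_ker {K M P : Type*} [DivisionRing K] [AddCommGroup M]
    [Module K M] [AddCommGroup P] [Module K P] [FiniteDimensional K M] [FiniteDimensional K P]
    (f : M →ₗ[K] P) : finrank K M - finrank K P ≤ finrank K (LinearMap.ker f) := by
  have := f.finrank_range_add_finrank_ker
  have := (LinearMap.range f).finrank_le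
  omega

theorem exists_linearMap_tensorProduct_tmul_mem_ker_eq_zero {K V W P : Type*} [Field K]
    [AddCommGroup V] [Module K V] [AddCommGroup W] [Module K W] [AddCommGroup P] [Module K P]
    [FiniteDimensional K V] [FiniteDimensional K W] [FiniteDimensional K P]
    (h : finrank K W ≤ finrank K V * finrank K P) :
    ∃ φ : V ⊗[K] W →ₗ[K] P, ∀ w : W, (∀ v : V, v ⊗ₜ[K] w ∈ LinearMap.ker φ) → w = 0 := by
  obtain ⟨ψ, hψ⟩ := finrank_le_iff_exists_linearMap.mp
    (by rwa [finrank_linearMap] : finrank K W ≤ finrank K (V →ₗ[K] P))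
  refine ⟨lift ψ.flip, fun w hw => hψ.eq_iff' (map_zero ψ) |>.mp ?_⟩
  ext v
  simpa using hw v

theorem stmt_2_general (K V W : Type*) [Field K] [AddCommGroup V] [Module K V]
    [AddCommGroup W] [Module K W] [FiniteDimensional K V] [FiniteDimensional K W]
    (r m c : ℕ) (hV : finrank K V = r) (hW : finrank K W = m)
    (hcr : m ≤ c * r) :
    ∃ H : Submodule K (V ⊗[K] W), finrank K H = r * m - c ∧
      ∀ w : W, (∀ v : V, v ⊗ₜ[K] w ∈ H) → w = 0 := by
  obtain ⟨φ, hφ⟩ := exists_linearMap_tensorProduct_tmul_mem_ker_eq_zero (V := V) (W := W)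
    (P := Fin c → K) (by rwa [hV, hW, finrank_fin_fun, mul_comm])
  have hker : r * m - c ≤ finrank K (LinearMap.ker φ) := by
    simpa [finrank_tensorProduct, hV, hW] using φ.sub_le_finrank_ker
  obtain ⟨H, hH, hrank⟩ := (LinearMap.ker φ).exists_le_finrank_eq hker
  exact ⟨H, hrank, fun w hw => hφ w fun v => hH (hw v)⟩

/-- If `dim V = r ≥ 1`, `dim W = m`, `c ≤ r·m` and `c·r ≥ m`, then there exists a
subspace `H ⊆ V ⊗ W` of codimension `c` containing no subspace of the form `V ⊗ w`
with `w ≠ 0`. -/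
theorem stmt_2 (K V W : Type*) [Field K] [AddCommGroup V] [Module K V]
    [AddCommGroup W] [Module K W] [FiniteDimensional K V] [FiniteDimensional K W]
    (r m c : ℕ) (hr : 1 ≤ r) (hV : finrank K V = r) (hW : finrank K W = m)
    (hc : c ≤ r * m) (hcr : m ≤ c * r) :
    ∃ H : Submodule K (V ⊗[K] W), finrank K H = r * m - c ∧
      ∀ w : W, (∀ v : V, v ⊗ₜ[K] w ∈ H) → w = 0 :=
  stmt_2_general K V W r m c hV hW hcr
end

section
/- Let (r₁, c₁, d₁) and (r₂, c₂, d₂) be triples of real numbers with r₁ ≠ 0, r₂ ≠ 0, and μ₁ ≠ μ₂, where μᵢ = cᵢ/rᵢ. Set Δᵢ = μᵢ²/2 − dᵢ/rᵢ and σ = (μ₁ + μ₂)/2 − (Δ₁ − Δ₂)/(μ₁ − μ₂). Then (σ − μ₁)² − 2Δ₁ = (σ − μ₂)² − 2Δ₂ =: ρ², and for every (s, t) ∈ ℝ² with t ≠ 0, the equality (−d₁ + s·c₁ − ((s² − t²)/2)·r₁) · t·(c₂ − s·r₂) = (−d₂ + s·c₂ − ((s² − t²)/2)·r₂) · t·(c₁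 − s·r₁) holds if and only if (s − σ)² + t² = ρ². -/
/-!
In the coordinates `μ = c/r`, `Δ = μ²/2 − d/r` the central charge of a character of nonzero
rank factors as `Re Z = (r/2)·(t² + 2Δ − (s − μ)²)` and `Im Z = t·r·(μ − s)`. After dividing by
`t·r₁·r₂/2`, the wall equation `Re Z(ξ₁)·Im Z(ξ₂) = Re Z(ξ₂)·Im Z(ξ₁)` becomes an equation in
which the cubic terms in `s` cancel; what is left is `(μ₂ − μ₁)` times the equation of a circle
centred on the `s`-axis, whose centre `σ` is where the two quantities `(σ − μᵢ)² − 2Δᵢ` agree.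
-/

lemma centralCharge_re_eq {r c d μ Δ : ℝ} (hr : r ≠ 0) (hμ : μ = c / r)
    (hΔ : Δ = μ ^ 2 / 2 - d / r) (s t : ℝ) :
    -d + s * c - ((s ^ 2 - t ^ 2) / 2) * r = r / 2 * (t ^ 2 + 2 * Δ - (s - μ) ^ 2) := by
  subst hΔ hμ
  field_simp
  ring

lemma centralCharge_im_eq {r c μ : ℝ} (hr : r ≠ 0) (hμ : μ = c / r) (s : ℝ) :
    c - s * r = r * (μ - s) := by
  subst hμ
  field_simp

lemma wallCenter_mul_sub {μ₁ μ₂ Δ₁ Δ₂ σ : ℝ} (hμ : μ₁ ≠ μ₂)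
    (hσ : σ = (μ₁ + μ₂) / 2 - (Δ₁ - Δ₂) / (μ₁ - μ₂)) :
    σ * (μ₁ - μ₂) = (μ₁ + μ₂) * (μ₁ - μ₂) / 2 - (Δ₁ - Δ₂) := by
  rw [hσ]
  field_simp [sub_ne_zero.mpr hμ]

lemma wallRadius_sq_eq {μ₁ μ₂ Δ₁ Δ₂ σ : ℝ} (hμ : μ₁ ≠ μ₂)
    (hσ : σ = (μ₁ + μ₂) / 2 - (Δ₁ - Δ₂) / (μ₁ - μ₂)) :
    (σ - μ₁) ^ 2 - 2 * Δ₁ = (σ - μ₂) ^ 2 - 2 * Δ₂ := by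
  linear_combination (-2 : ℝ) * wallCenter_mul_sub hμ hσ

lemma wallEquation_eq_circle {μ₁ μ₂ Δ₁ Δ₂ σ : ℝ} (hμ : μ₁ ≠ μ₂)
    (hσ : σ = (μ₁ + μ₂) / 2 - (Δ₁ - Δ₂) / (μ₁ - μ₂)) (s t : ℝ) :
    (t ^ 2 + 2 * Δ₁ - (s - μ₁) ^ 2) * (μ₂ - s) - (t ^ 2 + 2 * Δ₂ - (s - μ₂) ^ 2) * (μ₁ - s) =
      (μ₂ - μ₁) * ((s - σ) ^ 2 + t ^ 2 - ((σ - μ₁) ^ 2 - 2 * Δ₁)) := by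
  linear_combination (2 * (μ₁ - s)) * wallCenter_mul_sub hμ hσ

/-- The potential Bridgeland wall `W(ξ₁, ξ₂)` for two characters of nonzero rank and
distinct slopes is the semicircle with center `(σ, 0)` and radius `ρ`, where
`σ = (μ₁ + μ₂)/2 − (Δ₁ − Δ₂)/(μ₁ − μ₂)` and `ρ² = (σ − μ₁)² − 2Δ₁ = (σ − μ₂)² − 2Δ₂`. -/
theorem stmt_3 (r₁ c₁ d₁ r₂ c₂ d₂ μ₁ μ₂ Δ₁ Δ₂ σ : ℝ)
    (hr₁ : r₁ ≠ 0) (hr₂ : r₂ ≠ 0)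
    (hμ₁ : μ₁ = c₁ / r₁) (hμ₂ : μ₂ = c₂ / r₂) (hμ : μ₁ ≠ μ₂)
    (hΔ₁ : Δ₁ = μ₁ ^ 2 / 2 - d₁ / r₁) (hΔ₂ : Δ₂ = μ₂ ^ 2 / 2 - d₂ / r₂)
    (hσ : σ = (μ₁ + μ₂) / 2 - (Δ₁ - Δ₂) / (μ₁ - μ₂)) :
    (σ - μ₁) ^ 2 - 2 * Δ₁ = (σ - μ₂) ^ 2 - 2 * Δ₂ ∧
    ∀ s t : ℝ, t ≠ 0 →
      ((-d₁ + s * c₁ - ((s ^ 2 - t ^ 2) / 2) * r₁) * (t * (c₂ - s * r₂)) =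
        (-d₂ + s * c₂ - ((s ^ 2 - t ^ 2) / 2) * r₂) * (t * (c₁ - s * r₁)) ↔
        (s - σ) ^ 2 + t ^ 2 = (σ - μ₁) ^ 2 - 2 * Δ₁) := by
  refine ⟨wallRadius_sq_eq hμ hσ, fun s t ht => ?_⟩
  rw [centralCharge_re_eq hr₁ hμ₁ hΔ₁, centralCharge_re_eq hr₂ hμ₂ hΔ₂,
    centralCharge_im_eq hr₁ hμ₁, centralCharge_im_eq hr₂ hμ₂, ← sub_eq_zero,
    ← sub_eq_zero (a := (s - σ) ^ 2 + t ^ 2)]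
  have hfactor : t * r₁ * r₂ / 2 * (μ₂ - μ₁) ≠ 0 := by
    have := sub_ne_zero.mpr hμ.symm
    positivity
  have hwall :
      r₁ / 2 * (t ^ 2 + 2 * Δ₁ - (s - μ₁) ^ 2) * (t * (r₂ * (μ₂ - s))) -
          r₂ / 2 * (t ^ 2 + 2 * Δ₂ - (s - μ₂) ^ 2) * (t * (r₁ * (μ₁ - s))) =
        t * r₁ * r₂ / 2 * (μ₂ - μ₁) * ((s - σ) ^ 2 + t ^ 2 - ((σ - μ₁) ^ 2 - 2 * Δ₁)) := by
    rw [mul_assoc _ (μ₂ - μ₁), ← wallEquation_eq_circle hμ hσ]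
    ring
  rw [hwall, mul_eq_zero_iff_left hfactor]
end

section
/- Let μ ∈ ℝ and Δ ≥ 0. For every pair (x, t) of real numbers with t ≠ 0 and x ≠ μ, there exists a unique s ∈ ℝ such that (x − s)² + t² = (s − μ)² − 2Δ. Moreover this unique s satisfies (s − μ)² > 2Δ, and s < μ if and only if x < μ. -/
/-! The quadratic terms in `s` cancel: the wall equation is the linear equation
`(x - μ) (2s - x - μ) = t² + 2Δ`, whose slope `2 (x - μ)` is nonzero. As its right-hand side is
positive, `2s - x - μ` has the sign of `x - μ`, so `s` and `x` lie on the same side of `μ`. -/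

section PotentialWall

variable {μ Δ x t s : ℝ}

lemma wall_eq_iff_mul_eq :
    (x - s) ^ 2 + t ^ 2 = (s - μ) ^ 2 - 2 * Δ ↔ (x - μ) * (2 * s - x - μ) = t ^ 2 + 2 * Δ := by
  constructor <;> intro h <;> linear_combination -h

lemma existsUnique_mul_two_mul_sub_eq (hx : x ≠ μ) (c : ℝ) :
    ∃! s : ℝ, (x - μ) * (2 * s - x - μ) = c := by
  have hxμ : x - μ ≠ 0 := sub_ne_zero.mpr hx
  refine ⟨(c / (x - μ) + x + μ) / 2, by field_simp; ring, fun s hs => ?_⟩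
  have hs' : 2 * s - x - μ = c / (x - μ) := by rw [eq_div_iff hxμ, mul_comm, hs]
  linarith

lemma lt_iff_lt_of_mul_two_mul_sub_pos (h : 0 < (x - μ) * (2 * s - x - μ)) :
    s < μ ↔ x < μ := by
  rcases mul_pos_iff.mp h with ⟨_, _⟩ | ⟨_, _⟩ <;> constructor <;> intro <;> linarith

end PotentialWall

/-- Every point `(x, t)` of the half-plane `t ≠ 0` off the vertical line `x = μ` lies on a
unique potential Bridgeland wall: there is a unique `s` with `(x − s)² + t² = (s − μ)² − 2Δ`;
moreover this `s` satisfies `(s − μ)² > 2Δ`, and `s < μ` iff `x < μ`. -/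
theorem stmt_5 (μ Δ : ℝ) (hΔ : 0 ≤ Δ) (x t : ℝ) (ht : t ≠ 0) (hx : x ≠ μ) :
    (∃! s : ℝ, (x - s) ^ 2 + t ^ 2 = (s - μ) ^ 2 - 2 * Δ) ∧
    ∀ s : ℝ, (x - s) ^ 2 + t ^ 2 = (s - μ) ^ 2 - 2 * Δ →
      2 * Δ < (s - μ) ^ 2 ∧ (s < μ ↔ x < μ) := by
  have ht2 : 0 < t ^ 2 := by positivity
  refine ⟨by simpa only [wall_eq_iff_mul_eq] using existsUnique_mul_two_mul_sub_eq hx _,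
    fun s hs => ⟨by linarith [sq_nonneg (x - s)], ?_⟩⟩
  rw [wall_eq_iff_mul_eq] at hs
  exact lt_iff_lt_of_mul_two_mul_sub_pos (by linarith)
end

section
/- Let μ ∈ ℝ, Δ ≥ 0, and let s₁ < s₂ < μ be real numbers with (s₂ − μ)² > 2Δ. Then (s₁ − μ)² > 2Δ and √((s₁ − μ)² − 2Δ) − √((s₂ − μ)² − 2Δ) ≥ s₂ − s₁, with strict inequality when Δ > 0. In particular, the closed disk with center (s₂, 0) and radius √((s₂ − μ)² − 2Δ) is contained in the closed disk with center (s₁, 0) and radius √((s₁ − μ)² − 2Δ). -/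
/-!
Write `a = μ - s₂`, `b = μ - s₁` and `c = 2Δ`, so the radii are `√(a² - c)` and `√(b² - c)`.
The function `t ↦ √(t² - c)` grows at least at unit rate on `[√c, ∞)`: with `r = √(a² - c) ≤ a`,
`(r + (b - a))² = b² - c - 2 (a - r)(b - a) ≤ b² - c`, strictly so when `c > 0`, since then `r < a`.
The gap between the radii thus dominates the distance between the centres, which by the triangle
inequality is the containment of the disks.
-/

namespace Real

variable {a b c : ℝ}

theorem sqrt_sq_sub_le (ha : 0 ≤ a) (hc : 0 ≤ c) : √(a ^ 2 - c) ≤ a :=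
  (sqrt_le_left ha).2 (by linarith)

theorem sqrt_sq_sub_lt (ha : 0 < a) (hc : 0 < c) : √(a ^ 2 - c) < a :=
  (sqrt_lt' ha).2 (by linarith)

theorem sq_sqrt_sq_sub_add_sub (hca : c ≤ a ^ 2) :
    (√(a ^ 2 - c) + (b - a)) ^ 2 = b ^ 2 - c - 2 * (a - √(a ^ 2 - c)) * (b - a) := by
  have hr : √(a ^ 2 - c) ^ 2 = a ^ 2 - c := sq_sqrt (by linarith)
  linear_combination hr

theorem sub_le_sqrt_sq_sub_sub_sqrt_sq_sub (ha : 0 ≤ a) (hc : 0 ≤ c) (hca : c ≤ a ^ 2)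
    (hab : a ≤ b) : b - a ≤ √(b ^ 2 - c) - √(a ^ 2 - c) := by
  suffices √(a ^ 2 - c) + (b - a) ≤ √(b ^ 2 - c) by linarith
  refine le_sqrt_of_sq_le ?_
  rw [sq_sqrt_sq_sub_add_sub hca]
  have := mul_nonneg (sub_nonneg.2 (sqrt_sq_sub_le ha hc)) (sub_nonneg.2 hab)
  linarith

theorem sub_lt_sqrt_sq_sub_sub_sqrt_sq_sub (ha : 0 < a) (hc : 0 < c) (hca : c ≤ a ^ 2)
    (hab : a < b) : b - a < √(b ^ 2 - c) - √(a ^ 2 - c) := by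
  suffices √(a ^ 2 - c) + (b - a) < √(b ^ 2 - c) by linarith
  refine lt_sqrt_of_sq_lt ?_
  rw [sq_sqrt_sq_sub_add_sub hca]
  have := mul_pos (sub_pos.2 (sqrt_sq_sub_lt ha hc)) (sub_pos.2 hab)
  linarith

end Real

theorem sq_dist_le_sq_add_sub {x y s₁ s₂ r : ℝ} (hr : 0 ≤ r) (hs : s₁ ≤ s₂)
    (hp : (x - s₂) ^ 2 + y ^ 2 ≤ r ^ 2) : (x - s₁) ^ 2 + y ^ 2 ≤ (r + (s₂ - s₁)) ^ 2 := by
  have hx : x - s₂ ≤ r := abs_le_of_sq_le_sq' (by linarith [sq_nonneg y]) hr |>.2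
  nlinarith [mul_le_mul_of_nonneg_right hx (sub_nonneg.2 hs)]

/-- The semicircular potential Bridgeland walls left of the vertical wall are nested:
if `s₁ < s₂ < μ` and `(s₂ − μ)² > 2Δ`, then `(s₁ − μ)² > 2Δ`, the difference of radii
`√((s₁ − μ)² − 2Δ) − √((s₂ − μ)² − 2Δ)` is at least `s₂ − s₁` (strictly if `Δ > 0`),
and the closed disk with center `(s₂,0)` and radius `√((s₂ − μ)² − 2Δ)` is contained
in the one with center `(s₁, 0)` and radius `√((s₁ − μ)² − 2Δ)`. -/
theorem stmt_6 (μ Δ s₁ s₂ : ℝ) (hΔ : 0 ≤ Δ) (h₁₂ : s₁ < s₂) (h₂μ : s₂ < μ)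
    (h₂ : 2 * Δ < (s₂ - μ) ^ 2) :
    2 * Δ < (s₁ - μ) ^ 2 ∧
    s₂ - s₁ ≤ Real.sqrt ((s₁ - μ) ^ 2 - 2 * Δ) - Real.sqrt ((s₂ - μ) ^ 2 - 2 * Δ) ∧
    (0 < Δ → s₂ - s₁ < Real.sqrt ((s₁ - μ) ^ 2 - 2 * Δ) - Real.sqrt ((s₂ - μ) ^ 2 - 2 * Δ)) ∧
    ∀ p : ℝ × ℝ, (p.1 - s₂) ^ 2 + p.2 ^ 2 ≤ (s₂ - μ) ^ 2 - 2 * Δ →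
      (p.1 - s₁) ^ 2 + p.2 ^ 2 ≤ (s₁ - μ) ^ 2 - 2 * Δ := by
  rw [sub_sq_comm s₁, sub_sq_comm s₂] at *
  have hgap : (μ - s₁) - (μ - s₂) = s₂ - s₁ := by ring
  have ha : 0 < μ - s₂ := sub_pos.2 h₂μ
  have hab : μ - s₂ < μ - s₁ := by linarith
  have hc : 2 * Δ ≤ (μ - s₂) ^ 2 := h₂.le
  have hle := Real.sub_le_sqrt_sq_sub_sub_sqrt_sq_sub ha.le (by positivity) hc hab.le
  rw [hgap] at hle
  have h₁ : 2 * Δ < (μ - s₁) ^ 2 := h₂.trans (pow_lt_pow_left₀ hab ha.le two_ne_zero)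
  refine ⟨h₁, hle, fun hΔ₀ => ?_, ?_⟩
  · simpa only [hgap] using
      Real.sub_lt_sqrt_sq_sub_sub_sqrt_sq_sub ha (by positivity) hc hab
  · rintro ⟨x, y⟩ hp
    have hr₂ := Real.sqrt_nonneg ((μ - s₂) ^ 2 - 2 * Δ)
    rw [← Real.sq_sqrt (sub_nonneg.2 hc)] at hp
    calc (x - s₁) ^ 2 + y ^ 2
        ≤ (√((μ - s₂) ^ 2 - 2 * Δ) + (s₂ - s₁)) ^ 2 := sq_dist_le_sq_add_sub hr₂ h₁₂.le hp
      _ ≤ √((μ - s₁) ^ 2 - 2 * Δ) ^ 2 := by gcongr; linarith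
      _ = (μ - s₁) ^ 2 - 2 * Δ := Real.sq_sqrt (sub_nonneg.2 h₁.le)
end

section
/- Let r be a positive integer and let p, q ∈ ℚ with p < q, q − p = 1/r, and reduced denominators p.den ≤ r and q.den ≤ r. Assume that every rational number x with p < x < q has reduced denominator greater than r. Then p.den · q.den = r, and p.den = 1 or q.den = 1 (i.e., p or q is an integer). -/
/-!
Write `q = p + 1/r`. If `p * r` were not an integer, `(⌊p r⌋ + 1) / r` would lie strictly between
`p` and `q`; hence `p.den ∣ r`, and symmetrically (under `x ↦ -x`) `q.den ∣ r`. The mediant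
`(p.num + q.num) / (p.den + q.den)` lies between them, so `r < p.den + q.den`, which for two
divisors of `r` forces one of them, say `p.den`, to equal `r`. Writing `p = a / r`, choose
`0 < e ≤ r` with `a e + 1 = r m`; then `m / e - p = 1 / (e r)` and `q - m / e = (e - 1) / (e r)`,
so `e = 1`, i.e. `q = m` is an integer.
-/

def DenGtBetween (r : ℕ) (p q : ℚ) : Prop :=
  ∀ x : ℚ, p < x → x < q → r < x.den

lemma DenGtBetween.neg {r : ℕ} {p q : ℚ} (h : DenGtBetween r p q) : DenGtBetween r (-q) (-p) :=
  fun x hqx hxp => by simpa only [Rat.neg_den] using h (-x) (by linarith) (by linarith)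

lemma Rat.den_intCast_div_natCast_dvd (m : ℤ) (n : ℕ) : ((m : ℚ) / n).den ∣ n := by
  exact_mod_cast (Rat.divInt_eq_div m n ▸ Rat.den_dvd m n)

lemma DenGtBetween.den_dvd {r : ℕ} (hr : 0 < r) {p : ℚ} (h : DenGtBetween r p (p + 1 / r)) :
    p.den ∣ r := by
  have hrQ : (0 : ℚ) < r := by exact_mod_cast hr
  set m := ⌊p * r⌋
  suffices hpm : p = m / r by
    rw [hpm]; exact Rat.den_intCast_div_natCast_dvd m r
  by_contra hne
  have hm_lt : (m : ℚ) < p * r :=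
    (Int.floor_le _).lt_of_ne fun h => hne (by rw [h]; field_simp)
  have hlt_m : p * r < m + 1 := Int.lt_floor_add_one _
  have hx := h ((m + 1 : ℤ) / r) (by rw [lt_div_iff₀ hrQ]; push_cast; linarith)
    (by rw [div_lt_iff₀ hrQ, add_mul, div_mul_cancel₀ _ hrQ.ne']; push_cast; linarith)
  exact hx.not_ge (Nat.le_of_dvd hr (Rat.den_intCast_div_natCast_dvd _ _))

lemma DenGtBetween.lt_den_add_den {r : ℕ} {p q : ℚ} (hpq : p < q) (h : DenGtBetween r p q) :
    r < p.den + q.den := by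
  have hb : (0 : ℚ) < p.den := by positivity
  have hd : (0 : ℚ) < q.den := by positivity
  have hbd : (0 : ℚ) < ((p.den + q.den : ℕ) : ℚ) := by positivity
  have hp := Rat.mul_den_eq_num p
  have hq := Rat.mul_den_eq_num q
  have hmed := h ((p.num + q.num : ℤ) / (p.den + q.den : ℕ))
    (by rw [lt_div_iff₀ hbd]; push_cast; nlinarith)
    (by rw [div_lt_iff₀ hbd]; push_cast; nlinarith)
  exact hmed.trans_le (Nat.le_of_dvd (by positivity) (Rat.den_intCast_div_natCast_dvd _ _))

lemma Nat.eq_or_eq_of_dvd_of_lt_add {r b d : ℕ} (hr : 0 < r) (hb : b ∣ r) (hd : d ∣ r)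
    (h : r < b + d) : b = r ∨ d = r := by
  have half {a : ℕ} (ha : a ∣ r) : a = r ∨ 2 * a ≤ r := by
    obtain ⟨k, rfl⟩ := ha
    rcases k with _ | _ | k
    · omega
    · simp
    · right; nlinarith
  rcases half hb with hb | hb <;> rcases half hd with hd | hd <;> omega

lemma Int.exists_pos_le_dvd_mul_add_one {a r : ℤ} (hr : 0 < r) (h : IsCoprime a r) :
    ∃ e, 0 < e ∧ e ≤ r ∧ r ∣ a * e + 1 := by
  obtain ⟨u, v, huv⟩ := h
  refine ⟨r - u % r, by linarith [Int.emod_lt_of_pos u hr], by linarith [Int.emod_nonneg u hr.ne'],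
    ⟨a + a * (u / r) + v, ?_⟩⟩
  linear_combination (-a) * Int.mul_ediv_add_emod u r - huv

lemma DenGtBetween.den_add_eq_one {r : ℕ} {p : ℚ} (hden : p.den = r)
    (h : DenGtBetween r p (p + 1 / r)) : (p + 1 / r).den = 1 := by
  have hr : 0 < r := hden ▸ p.den_pos
  have hrQ : (0 : ℚ) < r := by exact_mod_cast hr
  have hp : p = p.num / r := hden ▸ (Rat.num_div_den p).symm
  have hq : p + 1 / r = ((p.num + 1 : ℤ) : ℚ) / (r : ℤ) := by
    have := hden ▸ Rat.mul_den_eq_num p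
    field_simp
    rw [this]
    push_cast
    ring
  obtain ⟨e, he0, her, m, hm⟩ := Int.exists_pos_le_dvd_mul_add_one (a := p.num) (r := r)
    (by exact_mod_cast hr) (hden ▸ Rat.isCoprime_num_den p)
  obtain rfl | he1 : e = 1 ∨ 1 < e := by omega
  · rw [hq, Rat.den_div_intCast_eq_one_iff _ _ (by exact_mod_cast hr.ne')]
    exact ⟨m, by simpa using hm⟩
  · lift e to ℕ using he0.le
    have heQ : (1 : ℚ) < e := by exact_mod_cast he1
    have hmQ : (p.num : ℚ) * e + 1 = r * m := by exact_mod_cast hm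
    have hx := h (m / e) (by rw [hp, div_lt_div_iff₀ hrQ (by linarith)]; linarith)
      (by rw [hq, div_lt_div_iff₀ (by linarith) (by exact_mod_cast hrQ)]; push_cast; linarith)
    exact (hx.not_ge ((Nat.le_of_dvd (by omega) (Rat.den_intCast_div_natCast_dvd m e)).trans
      (by exact_mod_cast her))).elim

theorem stmt_7_general (r : ℕ) (hr : 0 < r) (p q : ℚ) (hpq : p < q)
    (hdiff : q - p = 1 / (r : ℚ))
    (hbetween : ∀ x : ℚ, p < x → x < q → r < x.den) :
    p.den * q.den = r ∧ (p.den = 1 ∨ q.den = 1) := by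
  have hq : q = p + 1 / r := by linarith
  have hp : -p = -q + 1 / r := by linarith
  have hgap : DenGtBetween r p (p + 1 / r) := hq ▸ hbetween
  have hgap' : DenGtBetween r (-q) (-q + 1 / r) := hp ▸ DenGtBetween.neg hbetween
  have hpr : p.den ∣ r := hgap.den_dvd hr
  have hqr : q.den ∣ r := Rat.neg_den q ▸ hgap'.den_dvd hr
  rcases Nat.eq_or_eq_of_dvd_of_lt_add hr hpr hqr (DenGtBetween.lt_den_add_den hpq hbetween)
    with hpr | hqr
  · have hq1 : q.den = 1 := hq ▸ hgap.den_add_eq_one hpr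
    exact ⟨by rw [hpr, hq1, mul_one], Or.inr hq1⟩
  · have hp1 : p.den = 1 := by
      simpa only [← hp, Rat.neg_den] using hgap'.den_add_eq_one (by rwa [Rat.neg_den])
    exact ⟨by rw [hqr, hp1, one_mul], Or.inl hp1⟩

/-- Farey sequence argument: if `p < q` are rationals with denominators at most `r`
differing by `1/r`, such that every rational strictly between them has denominator
greater than `r`, then `p.den · q.den = r` and `p` or `q` is an integer. -/
theorem stmt_7 (r : ℕ) (hr : 0 < r) (p q : ℚ) (hpq : p < q)
    (hdiff : q - p = 1 / (r : ℚ)) (hp : p.den ≤ r) (hq : q.den ≤ r)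
    (hbetween : ∀ x : ℚ, p < x → x < q → r < x.den) :
    p.den * q.den = r ∧ (p.den = 1 ∨ q.den = 1) :=
  stmt_7_general r hr p q hpq hdiff hbetween
end

section
/- Let e, f, k be positive integers with f ≥ e + 1 and f − e ≤ k ≤ f. Then (f − k)² · (e + 1) ≤ e² · k · f; equivalently, as rational numbers, (k − f)²/(2·k·f) ≤ e²/(2·(e + 1)). -/
theorem Nat.sub_sq_mul_succ_le_sq_mul_mul {e f k : ℕ} (hfe : e + 1 ≤ f) (hk₁ : f - e ≤ k)
    (hk₂ : k ≤ f) : (f - k) ^ 2 * (e + 1) ≤ e ^ 2 * k * f := by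
  have hkf : e + 1 ≤ k * f := hfe.trans (Nat.le_mul_of_pos_left f (by omega))
  calc (f - k) ^ 2 * (e + 1) ≤ e ^ 2 * (k * f) :=
        Nat.mul_le_mul (Nat.pow_le_pow_left (by omega) 2) hkf
    _ = e ^ 2 * k * f := (Nat.mul_assoc _ _ _).symm

theorem Nat.sq_sub_div_le_sq_div_iff {e f k : ℕ} (hk : 0 < k) (hk₂ : k ≤ f) :
    ((k : ℚ) - f) ^ 2 / (2 * k * f) ≤ (e : ℚ) ^ 2 / (2 * (e + 1)) ↔
      (f - k) ^ 2 * (e + 1) ≤ e ^ 2 * k * f := by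
  have hf : 0 < f := hk.trans_le hk₂
  rw [div_le_div_iff₀ (by positivity) (by positivity), ← neg_sub, neg_sq, ← Nat.cast_sub hk₂]
  constructor <;> intro h
  · exact_mod_cast (show ((f - k : ℕ) : ℚ) ^ 2 * (e + 1) ≤ (e : ℚ) ^ 2 * k * f by linarith)
  · have : ((f - k : ℕ) : ℚ) ^ 2 * (e + 1) ≤ (e : ℚ) ^ 2 * k * f := by exact_mod_cast h
    linarith

theorem stmt_9_general (e f k : ℕ)
    (hfe : e + 1 ≤ f) (hk₁ : f - e ≤ k) (hk₂ : k ≤ f) :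
    (f - k) ^ 2 * (e + 1) ≤ e ^ 2 * k * f ∧
    ((k : ℚ) - (f : ℚ)) ^ 2 / (2 * k * f) ≤ (e : ℚ) ^ 2 / (2 * (e + 1)) := by
  have hint := Nat.sub_sq_mul_succ_le_sq_mul_mul hfe hk₁ hk₂
  exact ⟨hint, (Nat.sq_sub_div_le_sq_div_iff (by omega) hk₂).2 hint⟩

/-- Integer optimization step in Proposition 8.2: for positive integers `e, f, k` with
`f ≥ e + 1` and `f − e ≤ k ≤ f`, we have `(f − k)²(e + 1) ≤ e²·k·f`; equivalently,
`(k − f)²/(2kf) ≤ e²/(2(e + 1))` as rational numbers. -/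
theorem stmt_9 (e f k : ℕ) (he : 0 < e) (hf : 0 < f) (hk : 0 < k)
    (hfe : e + 1 ≤ f) (hk₁ : f - e ≤ k) (hk₂ : k ≤ f) :
    (f - k) ^ 2 * (e + 1) ≤ e ^ 2 * k * f ∧
    ((k : ℚ) - (f : ℚ)) ^ 2 / (2 * k * f) ≤ (e : ℚ) ^ 2 / (2 * (e + 1)) :=
  stmt_9_general e f k hfe hk₁ hk₂
end

section
/- Let e, f, k be positive integers with f ≥ e + 1 and f − e ≤ k ≤ f, and let ρ, Δ, μ, s be real numbers with ρ > 0, Δ ≥ 0, (μ − s)² = ρ² + 2Δ, and (k + f)·ρ ≤ (f − k)·(μ − s). Then ρ² ≤ (e²/(2·(e + 1)))·Δ. -/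
/-!
Squaring the slope inequality `(k + f)ρ ≤ (f − k)(μ − s)` and substituting the wall equation
`(μ − s)² = ρ² + 2Δ` leaves `2kfρ² ≤ (f − k)²Δ`, since `(k + f)² − (f − k)² = 4kf`.
The rank conditions give `0 ≤ f − k ≤ e` and `kf ≥ f ≥ e + 1`, which turns this into the bound.
-/

theorem two_mul_mul_sq_le_of_add_mul_le_sub_mul {k f ρ x Δ : ℝ} (hk : 0 ≤ k) (hf : 0 ≤ f)
    (hρ : 0 ≤ ρ) (hx : x ^ 2 = ρ ^ 2 + 2 * Δ) (h : (k + f) * ρ ≤ (f - k) * x) :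
    2 * (k * f) * ρ ^ 2 ≤ (f - k) ^ 2 * Δ := by
  have hsq : ((k + f) * ρ) ^ 2 ≤ ((f - k) * x) ^ 2 := pow_le_pow_left₀ (by positivity) h 2
  linear_combination hsq / 2 + (f - k) ^ 2 / 2 * hx

theorem sq_le_div_mul_of_two_mul_sq_le {d e p ρ Δ : ℝ} (hd : 0 ≤ d) (hde : d ≤ e)
    (hp : e + 1 ≤ p) (hρ : 0 < ρ) (h : 2 * p * ρ ^ 2 ≤ d ^ 2 * Δ) :
    ρ ^ 2 ≤ e ^ 2 / (2 * (e + 1)) * Δ := by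
  have he : 0 < e + 1 := by linarith
  have hΔ : 0 < Δ := pos_of_mul_pos_right (by nlinarith [sq_pos_of_pos hρ]) (sq_nonneg d)
  rw [div_mul_eq_mul_div, le_div_iff₀ (by positivity)]
  calc ρ ^ 2 * (2 * (e + 1)) ≤ 2 * p * ρ ^ 2 := by nlinarith [sq_nonneg ρ]
    _ ≤ d ^ 2 * Δ := h
    _ ≤ e ^ 2 * Δ := by gcongr

theorem Nat.succ_le_mul_of_sub_le {e f k : ℕ} (hfe : e + 1 ≤ f) (hk : f - e ≤ k) :
    e + 1 ≤ k * f :=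
  hfe.trans (Nat.le_mul_of_pos_left f (by omega))

theorem stmt_11_general (e f k : ℕ)
    (hfe : e + 1 ≤ f) (hk₁ : f - e ≤ k) (hk₂ : k ≤ f)
    (ρ Δ μ s : ℝ) (hρ : 0 < ρ)
    (hws : (μ - s) ^ 2 = ρ ^ 2 + 2 * Δ)
    (hineq : ((k : ℝ) + (f : ℝ)) * ρ ≤ ((f : ℝ) - (k : ℝ)) * (μ - s)) :
    ρ ^ 2 ≤ ((e : ℝ) ^ 2 / (2 * ((e : ℝ) + 1))) * Δ := by
  have hkf : (k : ℝ) ≤ f := by exact_mod_cast hk₂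
  have hfke : (f : ℝ) - k ≤ e := by
    rw [sub_le_iff_le_add]
    exact_mod_cast (show f ≤ e + k by omega)
  have hp : (e : ℝ) + 1 ≤ k * f := by exact_mod_cast Nat.succ_le_mul_of_sub_le hfe hk₁
  refine sq_le_div_mul_of_two_mul_sq_le (sub_nonneg.mpr hkf) hfke hp hρ ?_
  exact two_mul_mul_sq_le_of_add_mul_le_sub_mul k.cast_nonneg f.cast_nonneg hρ.le hws hineq

/-- Numerical core of Proposition 8.2: if a rank `e` sheaf with slope `μ` and discriminant
`Δ` is destabilized along a wall of center `(s,0)` and radius `ρ` by a rank `f > e`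
subobject with kernel of rank `k`, `max(1, f − e) ≤ k ≤ f`, and
`(k + f)ρ ≤ (f − k)(μ − s)`, then `ρ² ≤ e²Δ/(2(e + 1))`. -/
theorem stmt_11 (e f k : ℕ) (he : 0 < e) (hf : 0 < f) (hk : 0 < k)
    (hfe : e + 1 ≤ f) (hk₁ : f - e ≤ k) (hk₂ : k ≤ f)
    (ρ Δ μ s : ℝ) (hρ : 0 < ρ) (hΔ : 0 ≤ Δ)
    (hws : (μ - s) ^ 2 = ρ ^ 2 + 2 * Δ)
    (hineq : ((k : ℝ) + (f : ℝ)) * ρ ≤ ((f : ℝ) - (k : ℝ)) * (μ - s)) :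
    ρ ^ 2 ≤ ((e : ℝ) ^ 2 / (2 * ((e : ℝ) + 1))) * Δ :=
  stmt_11_general e f k hfe hk₁ hk₂ ρ Δ μ s hρ hws hineq
end

section
/- Let C be an abelian category that is linear over a field K, and let 0 → F →^ι E →^π Q → 0 be a short exact sequence in C. Assume Hom(F, Q) = 0, that every endomorphism of F is a scalar multiple of the identity of F, and that every endomorphism of Q is a scalar multiple of the identity of Q. Then every morphism F → E is a scalar multiple of ι, and every morphism E → Q is a scalar multiple of π. -/
open CategoryTheory CategoryTheory.Limits

namespace CategoryTheory.ShortComplex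

variable {K : Type*} [Semiring K] {C : Type*} [Category C] [Preadditive C] [Linear K C]
  [Balanced C] {S : ShortComplex C}

theorem Exact.exists_eq_smul_f (hS : S.Exact) [Mono S.f] (h₁₃ : ∀ f : S.X₁ ⟶ S.X₃, f = 0)
    (h₁ : ∀ f : S.X₁ ⟶ S.X₁, ∃ c : K, f = c • 𝟙 S.X₁) (f : S.X₁ ⟶ S.X₂) :
    ∃ c : K, f = c • S.f := by
  obtain ⟨l, rfl⟩ := hS.lift' f (h₁₃ _)
  obtain ⟨c, rfl⟩ := h₁ l
  exact ⟨c, by rw [Linear.smul_comp, Category.id_comp]⟩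

theorem Exact.exists_eq_smul_g (hS : S.Exact) [Epi S.g] (h₁₃ : ∀ f : S.X₁ ⟶ S.X₃, f = 0)
    (h₃ : ∀ f : S.X₃ ⟶ S.X₃, ∃ c : K, f = c • 𝟙 S.X₃) (g : S.X₂ ⟶ S.X₃) :
    ∃ c : K, g = c • S.g := by
  obtain ⟨l, rfl⟩ := hS.desc' g (h₁₃ _)
  obtain ⟨c, rfl⟩ := h₃ l
  exact ⟨c, by rw [Linear.comp_smul, Category.comp_id]⟩

end CategoryTheory.ShortComplex

/-- In a `K`-linear abelian category, if `0 → F → E → Q → 0` is exact, `Hom(F, Q) = 0`,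
and all endomorphisms of `F` and of `Q` are scalars, then every morphism `F → E` is a
scalar multiple of `ι` and every morphism `E → Q` is a scalar multiple of `π`. -/
theorem stmt_14 (K : Type*) [Field K] {C : Type*} [Category C] [Abelian C] [Linear K C]
    (F E Q : C) (ι : F ⟶ E) (π : E ⟶ Q) (w : ι ≫ π = 0)
    (hse : (ShortComplex.mk ι π w).ShortExact)
    (hFQ : ∀ f : F ⟶ Q, f = 0)
    (hF : ∀ f : F ⟶ F, ∃ c : K, f = c • 𝟙 F)
    (hQ : ∀ f : Q ⟶ Q, ∃ c : K, f = c • 𝟙 Q) :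
    (∀ f : F ⟶ E, ∃ c : K, f = c • ι) ∧ (∀ g : E ⟶ Q, ∃ c : K, g = c • π) :=
  have := hse.mono_f
  have := hse.epi_g
  ⟨hse.exact.exists_eq_smul_f hFQ hF, hse.exact.exists_eq_smul_g hFQ hQ⟩
end

section
/- Let C be an abelian category that is linear over a field K. Let 0 → F →^{ι₁} E₁ →^{π₁} Q → 0 and 0 → F →^{ι₂} E₂ →^{π₂} Q → 0 be short exact sequences in C with the same F and Q. Assume Hom(F, Q) = 0, that every endomorphism of F is a scalar multiple of the identity of F, and that every endomorphism of Q is a scalar multiple of the identity of Q. If ψ : E₁ → E₂ is an isomorphism, then there exist nonzero scalars c, c′ ∈ K with ψ ∘ ι₁ = c • ι₂ and π₂ ∘ ψ = c′ • π₁. -/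
/-!
An isomorphism `ψ : E₁ ≅ E₂` of extensions of `Q` by `F` sends `ι₁` to a morphism `F ⟶ E₂`
whose composite with `π₂` lies in `Hom(F, Q) = 0`, so it factors through `ι₂` via an
endomorphism of `F`, i.e. a scalar; dually `ψ ≫ π₂` factors through `π₁` via a scalar. A scalar
can only vanish when `F` (resp. `Q`) is the zero object, and then any nonzero scalar will do.
-/

open CategoryTheory CategoryTheory.Limits

theorem exists_ne_zero_eq_smul_of_eq_smul {K M : Type*} [Semiring K] [Nontrivial K]
    [AddCommMonoid M] [Module K M] {x y : M} {c : K} (hxy : x = c • y) (hy : x = 0 → y = 0) :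
    ∃ d : K, d ≠ 0 ∧ x = d • y := by
  by_cases hc : c = 0
  · have hx : x = 0 := by rw [hxy, hc, zero_smul]
    exact ⟨1, one_ne_zero, by rw [hy hx, hx, smul_zero]⟩
  · exact ⟨c, hc, hxy⟩

namespace CategoryTheory.ShortComplex.Exact

variable {K : Type*} [Semiring K] {C : Type*} [Category C] [Preadditive C] [Linear K C]
  [Balanced C] {S : ShortComplex C}

theorem exists_eq_smul_f_s15 (hS : S.Exact) [Mono S.f]
    (hX₁ : ∀ e : S.X₁ ⟶ S.X₁, ∃ c : K, e = c • 𝟙 S.X₁) {f : S.X₁ ⟶ S.X₂} (hf : f ≫ S.g = 0) :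
    ∃ c : K, f = c • S.f := by
  obtain ⟨e, rfl⟩ := hS.lift' f hf
  obtain ⟨c, rfl⟩ := hX₁ e
  exact ⟨c, by rw [Linear.smul_comp, Category.id_comp]⟩

theorem exists_eq_smul_g_s15 (hS : S.Exact) [Epi S.g]
    (hX₃ : ∀ e : S.X₃ ⟶ S.X₃, ∃ c : K, e = c • 𝟙 S.X₃) {g : S.X₂ ⟶ S.X₃} (hg : S.f ≫ g = 0) :
    ∃ c : K, g = c • S.g := by
  obtain ⟨e, rfl⟩ := hS.desc' g hg
  obtain ⟨c, rfl⟩ := hX₃ e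
  exact ⟨c, by rw [Linear.comp_smul, Category.comp_id]⟩

end CategoryTheory.ShortComplex.Exact

/-- Lemma 7.2: given two extensions `0 → F → Eᵢ → Q → 0` in a `K`-linear abelian category
with `Hom(F, Q) = 0` and all endomorphisms of `F` and `Q` scalars, any isomorphism
`ψ : E₁ ≅ E₂` carries `ι₁` to a nonzero multiple of `ι₂` and `π₁` to a nonzero multiple
of `π₂`. -/
theorem stmt_15 (K : Type*) [Field K] {C : Type*} [Category C] [Abelian C] [Linear K C]
    (F E₁ E₂ Q : C) (ι₁ : F ⟶ E₁) (π₁ : E₁ ⟶ Q) (w₁ : ι₁ ≫ π₁ = 0)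
    (ι₂ : F ⟶ E₂) (π₂ : E₂ ⟶ Q) (w₂ : ι₂ ≫ π₂ = 0)
    (hse₁ : (ShortComplex.mk ι₁ π₁ w₁).ShortExact)
    (hse₂ : (ShortComplex.mk ι₂ π₂ w₂).ShortExact)
    (hFQ : ∀ f : F ⟶ Q, f = 0)
    (hF : ∀ f : F ⟶ F, ∃ c : K, f = c • 𝟙 F)
    (hQ : ∀ f : Q ⟶ Q, ∃ c : K, f = c • 𝟙 Q)
    (ψ : E₁ ⟶ E₂) (hψ : IsIso ψ) :
    ∃ c c' : K, c ≠ 0 ∧ c' ≠ 0 ∧ ι₁ ≫ ψ = c • ι₂ ∧ ψ ≫ π₂ = c' • π₁ := by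
  have := hse₁.mono_f
  have := hse₂.mono_f
  have := hse₁.epi_g
  have := hse₂.epi_g
  obtain ⟨c, hc⟩ := hse₂.exact.exists_eq_smul_f_s15 hF (f := ι₁ ≫ ψ) (hFQ _)
  obtain ⟨c', hc'⟩ := hse₁.exact.exists_eq_smul_g_s15 hQ (g := ψ ≫ π₂)
    (by rw [← Category.assoc]; exact hFQ _)
  obtain ⟨d, hd, hι⟩ := exists_ne_zero_eq_smul_of_eq_smul hc fun h =>
    (IsZero.of_mono_eq_zero ι₁ ((Preadditive.IsIso.comp_right_eq_zero ι₁ ψ).1 h)).eq_of_src _ _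
  obtain ⟨d', hd', hπ⟩ := exists_ne_zero_eq_smul_of_eq_smul hc' fun h =>
    (IsZero.of_epi_eq_zero π₂ ((Preadditive.IsIso.comp_left_eq_zero ψ π₂).1 h)).eq_of_tgt _ _
  exact ⟨d, d', hd, hd', hι, hπ⟩
end
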